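/- Let g = (g_0,…,g_p) with each g_ℓ(z) = Σ_{m∈M} γ_{ℓm}B_m(z) a spline in S_d^r(△), and define the theoretical norm ‖g‖² = Σ_{ℓ,ℓ′=0}^p E(X_ℓX_{ℓ′}) ∫_Ω g_ℓ(z)g_{ℓ′}(z) dz. Then, under Assumptions (A3) and (A5), ‖g‖ is equivalent (up to constants independent of g and △) to Σ_{ℓ=0}^p ‖g_ℓ‖_{L²(Ω)}. -/

import Mathlib

noncomputable section
open MeasureTheory Filter

namespace IOSR

/-- partial derivative in the first coordinate -/
def pd1 (g : ℝ × ℝ → ℝ) : ℝ × ℝ → ℝ := fun z => deriv (fun t => g (t, z.2)) z.1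

/-- partial derivative in the second coordinate -/
def pd2 (g : ℝ × ℝ → ℝ) : ℝ × ℝ → ℝ := fun z => deriv (fun t => g (z.1, t)) z.2

/-- mixed partial derivative ∇_{z₁}^i ∇_{z₂}^j g -/
def pdm (i j : ℕ) (g : ℝ × ℝ → ℝ) : ℝ × ℝ → ℝ := pd1^[i] (pd2^[j] g)

/-- supremum norm over a set -/
def supN (Ω : Set (ℝ × ℝ)) (g : ℝ × ℝ → ℝ) : ℝ := ⨆ z ∈ Ω, |g z|

/-- seminorm |g|_{v,∞,Ω} : maximum sup-norm of all v-th order derivatives -/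
def semiN (Ω : Set (ℝ × ℝ)) (v : ℕ) (g : ℝ × ℝ → ℝ) : ℝ :=
  ⨆ i : Fin (v + 1), supN Ω (pdm i (v - (i : ℕ)) g)

/-- full Sobolev-type norm ‖g‖_{v,∞,Ω} (max over all orders up to v) -/
def sobN (Ω : Set (ℝ × ℝ)) (v : ℕ) (g : ℝ × ℝ → ℝ) : ℝ :=
  ⨆ k : Fin (v + 1), semiN Ω k g

/-- a triangle, given by its three vertices -/
structure Triangle where
  A : ℝ × ℝ
  B : ℝ × ℝ
  C : ℝ × ℝ

def Triangle.toSet (T : Triangle) : Set (ℝ × ℝ) := convexHull ℝ {T.A, T.B, T.C}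

def Triangle.vertices (T : Triangle) : Set (ℝ × ℝ) := {T.A, T.B, T.C}

/-- length of the longest edge of a triangle -/
def Triangle.longestEdge (T : Triangle) : ℝ :=
  max (dist T.A T.B) (max (dist T.B T.C) (dist T.A T.C))

/-- inradius: radius of the largest disk inscribed in the triangle -/
def Triangle.inradius (T : Triangle) : ℝ :=
  sSup {r : ℝ | 0 ≤ r ∧ ∃ c : ℝ × ℝ, Metric.closedBall c r ⊆ T.toSet}

/-- a triangulation of a planar domain Ω : a finite collection of nondegenerate
triangles whose union is Ω, such that any nonempty intersection of two distinct
triangles is either a shared vertex or a shared edge. -/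
structure TriangulationOf (Ω : Set (ℝ × ℝ)) where
  tris : Finset Triangle
  nonempty : tris.Nonempty
  nondeg : ∀ T ∈ tris, ¬ Collinear ℝ (Triangle.vertices T)
  covers : ⋃ T ∈ tris, Triangle.toSet T = Ω
  inter : ∀ T ∈ tris, ∀ T' ∈ tris, T ≠ T' →
    (Triangle.toSet T ∩ Triangle.toSet T' = ∅) ∨
    (∃ v ∈ Triangle.vertices T ∩ Triangle.vertices T',
        Triangle.toSet T ∩ Triangle.toSet T' = {v}) ∨
    (∃ u ∈ Triangle.vertices T ∩ Triangle.vertices T',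
     ∃ v ∈ Triangle.vertices T ∩ Triangle.vertices T', u ≠ v ∧
        Triangle.toSet T ∩ Triangle.toSet T' = segment ℝ u v)

/-- the size |Δ| of a triangulation : the length of its longest edge -/
def TriangulationOf.size {Ω : Set (ℝ × ℝ)} (Δ : TriangulationOf Ω) : ℝ :=
  Δ.tris.sup' Δ.nonempty Triangle.longestEdge

/-- π-quasi-uniformity of a triangulation -/
def TriangulationOf.QuasiUniform {Ω : Set (ℝ × ℝ)} (Δ : TriangulationOf Ω) (c : ℝ) : Prop :=
  ∀ T ∈ Δ.tris, Δ.size ≤ c * Triangle.inradius T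

/-- g coincides on S with a bivariate polynomial of total degree at most d -/
def IsPolyOn (d : ℕ) (S : Set (ℝ × ℝ)) (g : ℝ × ℝ → ℝ) : Prop :=
  ∃ q : MvPolynomial (Fin 2) ℝ, q.totalDegree ≤ d ∧
    ∀ z ∈ S, g z = MvPolynomial.eval ![z.1, z.2] q

/-- the spline space S_d^r(Δ) of C^r piecewise polynomials of degree ≤ d over Δ -/
def SplineSpace (Ω : Set (ℝ × ℝ)) (Δ : TriangulationOf Ω) (d r : ℕ) :
    Set ((ℝ × ℝ) → ℝ) :=
  {g | ContDiffOn ℝ r g Ω ∧ ∀ T ∈ Δ.tris, IsPolyOn d (Triangle.toSet T) g}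

/-- the roughness penalty E(g) = ∫_Ω Σ_{i+j=2} (2 choose i) (∇₁^i∇₂^j g)² -/
def energy (Ω : Set (ℝ × ℝ)) (g : ℝ × ℝ → ℝ) : ℝ :=
  ∫ z in Ω, ((pdm 2 0 g z) ^ 2 + 2 * (pdm 1 1 g z) ^ 2 + (pdm 0 2 g z) ^ 2)

/-- energy inner product ⟨g,h⟩_E -/
def energyIP (Ω : Set (ℝ × ℝ)) (g h : ℝ × ℝ → ℝ) : ℝ :=
  ∫ z in Ω, (pdm 2 0 g z * pdm 2 0 h z + 2 * (pdm 1 1 g z * pdm 1 1 h z)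
      + pdm 0 2 g z * pdm 0 2 h z)

/-- U_n = O_P(b_n) : lim_{c → ∞} limsup_n P(|U_n| ≥ c b_n) = 0 -/
def IsBigOP {S : Type*} [MeasurableSpace S] (P : Measure S)
    (U : ℕ → S → ℝ) (b : ℕ → ℝ) : Prop :=
  Tendsto (fun c : ℝ =>
      limsup (fun n => (P {ω | c * b n ≤ |U n ω|}).toReal) atTop) atTop (nhds 0)

/-- U_n = o_P(1) : convergence to zero in probability -/
def IsLittleOP {S : Type*} [MeasurableSpace S] (P : Measure S) (U : ℕ → S → ℝ) : Prop :=
  ∀ ε : ℝ, 0 < ε → Tendsto (fun n => (P {ω | ε ≤ |U n ω|}).toReal) atTop (nhds 0)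

/-- convergence in distribution (weak convergence of laws, tested against
bounded continuous functions) -/
def TendstoInDistribution {S E : Type*} [MeasurableSpace S] [MeasurableSpace E]
    [TopologicalSpace E] (P : Measure S) (X : ℕ → S → E) (μ : Measure E) : Prop :=
  ∀ f : BoundedContinuousFunction E ℝ,
    Tendsto (fun n => ∫ ω, f (X n ω) ∂P) atTop (nhds (∫ x, f x ∂μ))

/-- the standard k-dimensional Gaussian N(0, I_k) -/
def stdGaussian (k : ℕ) : Measure (Fin k → ℝ) :=
  Measure.pi fun _ => ProbabilityTheory.gaussianReal 0 1

end IOSR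

/-!
The eigenvalue bounds of (A3) hold pointwise for the vector `(g_ℓ(z))_ℓ`; integrating them over
`Ω` sandwiches `‖g‖²` between `cX` and `CX` times `∑ ℓ, ‖g_ℓ‖²_{L²}`, and on `ℝ^{p+1}` the
ℓ² norm of `(‖g_ℓ‖_{L²})_ℓ` lies between `(p+1)^{-1/2}` times its ℓ¹ norm and the ℓ¹ norm
itself. Splines are continuous on `Ω`, which a triangulation makes compact, so all these
integrals are finite.
-/

namespace IOSR

open Finset Real

theorem Triangle.isCompact_toSet (T : Triangle) : IsCompact T.toSet :=
  ((Set.finite_singleton _).insert _ |>.insert _).isCompact_convexHull (𝕜 := ℝ)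

theorem TriangulationOf.isCompact {Ω : Set (ℝ × ℝ)} (Δ : TriangulationOf Ω) : IsCompact Ω := by
  rw [← Δ.covers]
  exact Δ.tris.finite_toSet.isCompact_biUnion fun T _ => T.isCompact_toSet

theorem integrableOn_mul_of_mem_splineSpace {Ω : Set (ℝ × ℝ)} {Δ : TriangulationOf Ω}
    {d r : ℕ} {g h : ℝ × ℝ → ℝ} (hg : g ∈ SplineSpace Ω Δ d r) (hh : h ∈ SplineSpace Ω Δ d r) :
    IntegrableOn (fun z => g z * h z) Ω :=
  (hg.1.continuousOn.mul hh.1.continuousOn).integrableOn_compact Δ.isCompact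

section QuadraticForm

variable {ι α : Type*} [Fintype ι] [MeasurableSpace α] {μ : Measure α}

theorem le_of_forall_mul_sum_sq_le [Nonempty ι] {q : (ι → ℝ) → ℝ} {c C : ℝ}
    (hlow : ∀ v, c * ∑ i, v i ^ 2 ≤ q v) (hup : ∀ v, q v ≤ C * ∑ i, v i ^ 2) : c ≤ C := by
  have h := (hlow 1).trans (hup 1)
  simp only [Pi.one_apply, one_pow, sum_const, card_univ, nsmul_eq_mul, mul_one] at h
  exact le_of_mul_le_mul_right h (by exact_mod_cast Fintype.card_pos)

theorem sum_integral_sq_eq_integral_sum_sq {f : ι → α → ℝ}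
    (hf : ∀ i, Integrable (fun x => f i x ^ 2) μ) :
    ∑ i, ∫ x, f i x ^ 2 ∂μ = ∫ x, ∑ i, f i x ^ 2 ∂μ :=
  (integral_finsetSum _ fun i _ => hf i).symm

theorem sum_sum_mul_integral_mul_eq_integral_sum_sum (σ : ι → ι → ℝ) {f : ι → α → ℝ}
    (hf : ∀ i j, Integrable (fun x => f i x * f j x) μ) :
    ∑ i, ∑ j, σ i j * ∫ x, f i x * f j x ∂μ = ∫ x, ∑ i, ∑ j, f i x * f j x * σ i j ∂μ := by
  rw [integral_finsetSum _ fun i _ => integrable_finsetSum _ fun j _ => (hf i j).mul_const _]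
  refine sum_congr rfl fun i _ => ?_
  rw [integral_finsetSum _ fun j _ => (hf i j).mul_const _]
  exact sum_congr rfl fun j _ => by rw [integral_mul_const, mul_comm]

theorem mul_sum_integral_sq_le_sum_sum_mul_integral {σ : ι → ι → ℝ} {c : ℝ}
    (hσ : ∀ v : ι → ℝ, c * ∑ i, v i ^ 2 ≤ ∑ i, ∑ j, v i * v j * σ i j) {f : ι → α → ℝ}
    (hf : ∀ i j, Integrable (fun x => f i x * f j x) μ) :
    c * ∑ i, ∫ x, f i x ^ 2 ∂μ ≤ ∑ i, ∑ j, σ i j * ∫ x, f i x * f j x ∂μ := by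
  have hsq : ∀ i, Integrable (fun x => f i x ^ 2) μ := fun i => by simpa only [sq] using hf i i
  rw [sum_integral_sq_eq_integral_sum_sq hsq, sum_sum_mul_integral_mul_eq_integral_sum_sum σ hf,
    ← integral_const_mul]
  exact integral_mono ((integrable_finsetSum _ fun i _ => hsq i).const_mul c)
    (integrable_finsetSum _ fun i _ => integrable_finsetSum _ fun j _ => (hf i j).mul_const _)
    fun x => hσ fun i => f i x

theorem sum_sum_mul_integral_le_mul_sum_integral_sq {σ : ι → ι → ℝ} {C : ℝ}
    (hσ : ∀ v : ι → ℝ, ∑ i, ∑ j, v i * v j * σ i j ≤ C * ∑ i, v i ^ 2) {f : ι → α → ℝ}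
    (hf : ∀ i j, Integrable (fun x => f i x * f j x) μ) :
    ∑ i, ∑ j, σ i j * ∫ x, f i x * f j x ∂μ ≤ C * ∑ i, ∫ x, f i x ^ 2 ∂μ := by
  have hsq : ∀ i, Integrable (fun x => f i x ^ 2) μ := fun i => by simpa only [sq] using hf i i
  rw [sum_integral_sq_eq_integral_sum_sq hsq, sum_sum_mul_integral_mul_eq_integral_sum_sum σ hf,
    ← integral_const_mul]
  exact integral_mono
    (integrable_finsetSum _ fun i _ => integrable_finsetSum _ fun j _ => (hf i j).mul_const _)
    ((integrable_finsetSum _ fun i _ => hsq i).const_mul C) fun x => hσ fun i => f i x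

end QuadraticForm

section SumSqrt

variable {ι : Type*} [Fintype ι] {a : ι → ℝ} {c Q : ℝ}

theorem sqrt_div_card_mul_sum_sqrt_le_sqrt [Nonempty ι] (hc : 0 ≤ c) (ha : ∀ i, 0 ≤ a i)
    (h : c * ∑ i, a i ≤ Q) : √(c / Fintype.card ι) * ∑ i, √(a i) ≤ √Q := by
  have hcard : (0 : ℝ) < Fintype.card ι := by exact_mod_cast Fintype.card_pos
  have hCS : (∑ i, √(a i)) ^ 2 ≤ Fintype.card ι * ∑ i, a i := by
    simpa only [card_univ, sq_sqrt (ha _)] using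
      sq_sum_le_card_mul_sum_sq (s := univ) (f := fun i => √(a i))
  calc √(c / Fintype.card ι) * ∑ i, √(a i)
      = √(c / Fintype.card ι * (∑ i, √(a i)) ^ 2) := by
        rw [sqrt_mul (by positivity), sqrt_sq (sum_nonneg fun i _ => sqrt_nonneg _)]
    _ ≤ √(c / Fintype.card ι * (Fintype.card ι * ∑ i, a i)) := by gcongr
    _ = √(c * ∑ i, a i) := by rw [← mul_assoc, div_mul_cancel₀ c hcard.ne']
    _ ≤ √Q := sqrt_le_sqrt h

theorem sqrt_le_sqrt_mul_sum_sqrt (hc : 0 ≤ c) (ha : ∀ i, 0 ≤ a i) (h : Q ≤ c * ∑ i, a i) :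
    √Q ≤ √c * ∑ i, √(a i) := by
  have hsum : ∑ i, a i ≤ (∑ i, √(a i)) ^ 2 := by
    simpa only [sq_sqrt (ha _)] using
      sum_sq_le_sq_sum_of_nonneg (s := univ) fun i _ => sqrt_nonneg (a i)
  calc √Q ≤ √(c * (∑ i, √(a i)) ^ 2) := sqrt_le_sqrt (h.trans (by gcongr))
    _ = √c * ∑ i, √(a i) := by
        rw [sqrt_mul hc, sqrt_sq (sum_nonneg fun i _ => sqrt_nonneg _)]

end SumSqrt

theorem theoretical_norm_equivalence_general
    (Ωd : Set (ℝ × ℝ)) (p d r : ℕ)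
    (S : Type) [MeasurableSpace S] (P : Measure S)
    (X : Fin (p + 1) → S → ℝ)
    -- (A3)
    (cX CX : ℝ) (hcX : 0 < cX)
    (hA3ev : ∀ v : Fin (p + 1) → ℝ,
        (cX * ∑ ℓ, (v ℓ) ^ 2 ≤ ∑ ℓ, ∑ ℓ', v ℓ * v ℓ' * ∫ ω, X ℓ ω * X ℓ' ω ∂P) ∧
        (∑ ℓ, ∑ ℓ', v ℓ * v ℓ' * ∫ ω, X ℓ ω * X ℓ' ω ∂P ≤ CX * ∑ ℓ, (v ℓ) ^ 2))
    -- (A5): quasi-uniformity constant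
    (π₀ : ℝ) :
    ∃ c C : ℝ, 0 < c ∧ c ≤ C ∧
      ∀ Δ : TriangulationOf Ωd, Δ.QuasiUniform π₀ →
        ∀ g : Fin (p + 1) → (ℝ × ℝ) → ℝ, (∀ ℓ, g ℓ ∈ SplineSpace Ωd Δ d r) →
          (c * ∑ ℓ, Real.sqrt (∫ zz in Ωd, (g ℓ zz) ^ 2) ≤
            Real.sqrt (∑ ℓ, ∑ ℓ', (∫ ω, X ℓ ω * X ℓ' ω ∂P) *
              ∫ zz in Ωd, g ℓ zz * g ℓ' zz)) ∧
          (Real.sqrt (∑ ℓ, ∑ ℓ', (∫ ω, X ℓ ω * X ℓ' ω ∂P) *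
              ∫ zz in Ωd, g ℓ zz * g ℓ' zz) ≤
            C * ∑ ℓ, Real.sqrt (∫ zz in Ωd, (g ℓ zz) ^ 2)) := by
  have hcC : cX ≤ CX := le_of_forall_mul_sum_sq_le (fun v => (hA3ev v).1) fun v => (hA3ev v).2
  have hcard : (1 : ℝ) ≤ Fintype.card (Fin (p + 1)) := by exact_mod_cast Fintype.card_pos
  refine ⟨√(cX / Fintype.card (Fin (p + 1))), √CX, by positivity,
    sqrt_le_sqrt ((div_le_self hcX.le hcard).trans hcC), fun Δ _ g hg => ?_⟩
  have hint ℓ ℓ' := integrableOn_mul_of_mem_splineSpace (hg ℓ) (hg ℓ')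
  have hsq ℓ : 0 ≤ ∫ z in Ωd, g ℓ z ^ 2 := integral_nonneg fun z => sq_nonneg _
  exact ⟨sqrt_div_card_mul_sum_sqrt_le_sqrt hcX.le hsq
      (mul_sum_integral_sq_le_sum_sum_mul_integral (fun v => (hA3ev v).1) hint),
    sqrt_le_sqrt_mul_sum_sqrt (hcX.le.trans hcC) hsq
      (sum_sum_mul_integral_le_mul_sum_integral_sq (fun v => (hA3ev v).2) hint)⟩

/-- **Lemma (equivalence of the theoretical norm with the sum of L² norms).**
For g = (g_0,…,g_p) with components in S_d^r(△), under Assumptions (A3) and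
(A5), the theoretical norm ‖g‖ (induced by the inner product
⟨g,h⟩ = Σ_{ℓ,ℓ′} E(X_ℓX_{ℓ′}) ∫_Ω g_ℓ h_{ℓ′}) is equivalent, up to constants
independent of g and of the triangulation, to Σ_ℓ ‖g_ℓ‖_{L²(Ω)}. -/
theorem theoretical_norm_equivalence
    (Ωd : Set (ℝ × ℝ)) (p d r : ℕ)
    (S : Type) [MeasurableSpace S] (P : Measure S) [IsProbabilityMeasure P]
    (X : Fin (p + 1) → S → ℝ)
    (hΩb : Bornology.IsBounded Ωd) (hΩvol : volume Ωd = 1)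
    (hX0 : ∀ ω, X 0 ω = 1)
    -- (A3)
    (hA3mom : ∀ ℓ, Integrable (fun ω => |X ℓ ω| ^ (8 : ℕ)) P)
    (cX CX : ℝ) (hcX : 0 < cX)
    (hA3ev : ∀ v : Fin (p + 1) → ℝ,
        (cX * ∑ ℓ, (v ℓ) ^ 2 ≤ ∑ ℓ, ∑ ℓ', v ℓ * v ℓ' * ∫ ω, X ℓ ω * X ℓ' ω ∂P) ∧
        (∑ ℓ, ∑ ℓ', v ℓ * v ℓ' * ∫ ω, X ℓ ω * X ℓ' ω ∂P ≤ CX * ∑ ℓ, (v ℓ) ^ 2))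
    -- (A5): quasi-uniformity constant
    (π₀ : ℝ) (hπ₀ : 0 < π₀) :
    ∃ c C : ℝ, 0 < c ∧ c ≤ C ∧
      ∀ Δ : TriangulationOf Ωd, Δ.QuasiUniform π₀ →
        ∀ g : Fin (p + 1) → (ℝ × ℝ) → ℝ, (∀ ℓ, g ℓ ∈ SplineSpace Ωd Δ d r) →
          (c * ∑ ℓ, Real.sqrt (∫ zz in Ωd, (g ℓ zz) ^ 2) ≤
            Real.sqrt (∑ ℓ, ∑ ℓ', (∫ ω, X ℓ ω * X ℓ' ω ∂P) *
              ∫ zz in Ωd, g ℓ zz * g ℓ' zz)) ∧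
          (Real.sqrt (∑ ℓ, ∑ ℓ', (∫ ω, X ℓ ω * X ℓ' ω ∂P) *
              ∫ zz in Ωd, g ℓ zz * g ℓ' zz) ≤
            C * ∑ ℓ, Real.sqrt (∫ zz in Ωd, (g ℓ zz) ^ 2)) :=
  theoretical_norm_equivalence_general Ωd p d r S P X cX CX hcX hA3ev π₀

end IOSR
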